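/- arXiv:2305.04306 — 3 statements merged into one kernel-verified Lean document; each statement's English description precedes it below -/
import Mathlib

section
/- If T is a tangle of separations in (X, f) of order k+1, then F = {(A, B) : (B, A) ∈ T} is an ultrafilter of separations of order k+1 on (X, f). -/
open Set

variable {α : Type*}

/-- Symmetry of a set function: `f A = f Aᶜ`. -/
def SymmFn (f : Set α → ℕ) : Prop := ∀ A : Set α, f A = f Aᶜ

/-- Submodularity of a set function. -/
def SubmodFn (f : Set α → ℕ) : Prop :=
  ∀ A B : Set α, f A + f B ≥ f (A ∩ B) + f (A ∪ B)

/-- A separation of the ground set: a partition `(A, B)` of the universe. -/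
def IsSep (p : Set α × Set α) : Prop :=
  p.1 ∪ p.2 = Set.univ ∧ p.1 ∩ p.2 = ∅

/-- Partial order on separations: `(A,B) ≤ (C,D)` iff `A ⊆ C` and `D ⊆ B`. -/
def SepLE (p q : Set α × Set α) : Prop := p.1 ⊆ q.1 ∧ q.2 ⊆ p.2

/-- Tangle of separations of order `k+1`. -/
def IsTangle (f : Set α → ℕ) (k : ℕ) (T : Set (Set α × Set α)) : Prop :=
  (∀ p ∈ T, IsSep p ∧ f p.1 ≤ k) ∧
  (∀ A B : Set α, IsSep (A, B) → f A ≤ k → ((A, B) ∈ T ∨ (B, A) ∈ T)) ∧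
  (∀ e : α, f {e} ≤ k → (({e} : Set α), ({e} : Set α)ᶜ) ∈ T) ∧
  (∀ p₁ ∈ T, ∀ p₂ ∈ T, ∀ p₃ ∈ T,
    p₁.1 ∪ p₂.1 ∪ p₃.1 ≠ (Set.univ : Set α))

/-- Linear tangle of separations of order `k+1`. -/
def IsLinearTangle (f : Set α → ℕ) (k : ℕ) (T : Set (Set α × Set α)) : Prop :=
  (∀ p ∈ T, IsSep p ∧ f p.1 ≤ k) ∧
  (∀ A B : Set α, IsSep (A, B) → f A ≤ k → ((A, B) ∈ T ∨ (B, A) ∈ T)) ∧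
  (∀ e : α, f {e} ≤ k → (({e} : Set α), ({e} : Set α)ᶜ) ∈ T) ∧
  (∀ p₁ ∈ T, ∀ p₂ ∈ T, ∀ e : α, f {e} ≤ k →
    p₁.1 ∪ p₂.1 ∪ {e} ≠ (Set.univ : Set α))

/-- Ultrafilter of separations of order `k+1`. -/
def IsUltraSep (f : Set α → ℕ) (k : ℕ) (F : Set (Set α × Set α)) : Prop :=
  (∀ p ∈ F, IsSep p ∧ f p.1 ≤ k) ∧
  (∀ A B : Set α, IsSep (A, B) → f A ≤ k → ((A, B) ∈ F ∨ (B, A) ∈ F)) ∧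
  ((∅, (Set.univ : Set α)) ∉ F) ∧
  (∀ e : α, f {e} ≤ k → (({e} : Set α), ({e} : Set α)ᶜ) ∉ F) ∧
  (∀ p ∈ F, ∀ q : Set α × Set α, SepLE p q → IsSep q → f q.1 ≤ k → q ∈ F) ∧
  (∀ p ∈ F, ∀ q ∈ F, f (p.1 ∩ q.1) ≤ k → (p.1 ∩ q.1, p.2 ∪ q.2) ∈ F)

/-- Weak ultrafilter of separations of order `k+1`. -/
def IsWeakUltraSep (f : Set α → ℕ) (k : ℕ) (F : Set (Set α × Set α)) : Prop :=
  (∀ p ∈ F, IsSep p ∧ f p.1 ≤ k) ∧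
  (∀ A B : Set α, IsSep (A, B) → f A ≤ k → ((A, B) ∈ F ∨ (B, A) ∈ F)) ∧
  ((∅, (Set.univ : Set α)) ∉ F) ∧
  (∀ e : α, f {e} ≤ k → (({e} : Set α), ({e} : Set α)ᶜ) ∉ F) ∧
  (∀ p ∈ F, ∀ q : Set α × Set α, SepLE p q → IsSep q → f q.1 ≤ k → q ∈ F) ∧
  (∀ p ∈ F, ∀ q ∈ F, f (p.1 ∩ q.1) ≤ k → p.1 ∩ q.1 ≠ ∅)

/-- Single ultrafilter of separations of order `k+1`. -/
def IsSingleUltraSep (f : Set α → ℕ) (k : ℕ) (F : Set (Set α × Set α)) : Prop :=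
  (∀ p ∈ F, IsSep p ∧ f p.1 ≤ k) ∧
  (∀ A B : Set α, IsSep (A, B) → f A ≤ k → ((A, B) ∈ F ∨ (B, A) ∈ F)) ∧
  ((∅, (Set.univ : Set α)) ∉ F) ∧
  (∀ e : α, f {e} ≤ k → (({e} : Set α), ({e} : Set α)ᶜ) ∉ F) ∧
  (∀ p ∈ F, ∀ q : Set α × Set α, SepLE p q → IsSep q → f q.1 ≤ k → q ∈ F) ∧
  (∀ p ∈ F, ∀ e : α, f {e} ≤ k → f (p.1 \ {e}) ≤ k →
    (p.1 \ {e}, p.2 ∪ {e}) ∈ F)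

/-- Profile of separations of order `k+1`. -/
def IsProfileSep (f : Set α → ℕ) (k : ℕ) (P : Set (Set α × Set α)) : Prop :=
  (∀ p ∈ P, IsSep p ∧ f p.1 ≤ k) ∧
  (∀ A B : Set α, IsSep (A, B) → f A ≤ k → ((A, B) ∈ P ∨ (B, A) ∈ P)) ∧
  (∀ p : Set α × Set α, ∀ q ∈ P, SepLE p q → IsSep p → f p.1 ≤ k →
    (p.2, p.1) ∉ P) ∧
  (∀ p ∈ P, ∀ q ∈ P, (p.2 ∩ q.2, p.1 ∪ q.1) ∉ P)

/-- A profile is non-principal if it contains all small singleton separations. -/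
def NonPrincipalSep (f : Set α → ℕ) (k : ℕ) (P : Set (Set α × Set α)) : Prop :=
  ∀ e : α, f {e} ≤ k → (({e} : Set α), ({e} : Set α)ᶜ) ∈ P

/-! Each ultrafilter axiom for the inverted separations can fail only if some separation and its
inverse both lie in `T`; the covering axiom (T3) rules that out once the three small sides are
seen to cover `X`. -/

lemma isSep_iff_isCompl {p : Set α × Set α} : IsSep p ↔ IsCompl p.1 p.2 := by
  rw [isCompl_iff, Set.disjoint_iff_inter_eq_empty, codisjoint_iff, IsSep, and_comm]
  rfl

lemma IsSep.swap {p : Set α × Set α} (h : IsSep p) : IsSep (p.2, p.1) :=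
  isSep_iff_isCompl.2 (isSep_iff_isCompl.1 h).symm

lemma SymmFn.apply_snd {f : Set α → ℕ} (hs : SymmFn f) {p : Set α × Set α} (h : IsSep p) :
    f p.2 = f p.1 := by
  rw [hs p.1, (isSep_iff_isCompl.1 h).compl_eq]

lemma IsTangle.swap_mem_of_union_eq_univ {f : Set α → ℕ} {k : ℕ} {T : Set (Set α × Set α)}
    (hT : IsTangle f k T) {A B : Set α} (hAB : IsSep (A, B)) (hA : f A ≤ k)
    {p q : Set α × Set α} (hp : p ∈ T) (hq : q ∈ T) (hcover : A ∪ p.1 ∪ q.1 = univ) :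
    (B, A) ∈ T :=
  (hT.2.1 A B hAB hA).resolve_left fun hABT ↦ hT.2.2.2 _ hABT _ hp _ hq hcover

theorem stmt6_general (f : Set α → ℕ) (hs : SymmFn f)
    (k : ℕ) (T : Set (Set α × Set α)) (hT : IsTangle f k T) :
    IsUltraSep f k {p : Set α × Set α | (p.2, p.1) ∈ T} := by
  obtain ⟨hsmall, htotal, hsingle, hcover⟩ := id hT
  refine ⟨fun p hp ↦ ?_, fun A B hAB hA ↦ (htotal A B hAB hA).symm,
    fun hempty ↦ hcover _ hempty _ hempty _ hempty (by simp),
    fun e he hco ↦ hcover _ (hsingle e he) _ hco _ hco (by simp),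
    fun p hp q hpq hq hfq ↦ hT.swap_mem_of_union_eq_univ hq hfq hp hp ?_,
    fun p hp q hq hfpq ↦ ?_⟩
  · obtain ⟨hsep, hf⟩ := hsmall _ hp
    exact ⟨hsep.swap, hs.apply_snd hsep ▸ hf⟩
  · show q.1 ∪ p.2 ∪ p.2 = univ
    rw [Set.union_assoc, Set.union_self, ← Set.univ_subset_iff, ← hq.1]
    exact Set.union_subset_union_right _ hpq.2
  · have hsep : IsSep (p.1 ∩ q.1, p.2 ∪ q.2) := isSep_iff_isCompl.2 <|
      (isSep_iff_isCompl.1 (hsmall _ hp).1).symm.inf_sup (isSep_iff_isCompl.1 (hsmall _ hq).1).symm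
    exact hT.swap_mem_of_union_eq_univ hsep hfpq hp hq (by rw [Set.union_assoc, hsep.1])

theorem stmt6 [Fintype α] (f : Set α → ℕ) (hs : SymmFn f) (hm : SubmodFn f)
    (k : ℕ) (T : Set (Set α × Set α)) (hT : IsTangle f k T) :
    IsUltraSep f k {p : Set α × Set α | (p.2, p.1) ∈ T} :=
  stmt6_general f hs k T hT
end

section
/- If F is an ultrafilter of separations in (X, f) of order k+1, then for any (A₁, B₁), (A₂, B₂), (A₃, B₃) ∈ F, the intersection A₁ ∩ A₂ ∩ A₃ is non-empty. -/
open Set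

variable {α : Type*}

/-!
Posimodularity, `f (A \ B) + f (B \ A) ≤ f A + f B`, orients each pair among the three sets
`X → Y` with `f (X \ Y) ≤ k`; a tournament on three vertices has a directed path `Z → X → Y`.
Two members of an ultrafilter always meet, since otherwise (F5) would put `(∅, univ)` in it.
So `X \ Y`, being disjoint from `Y`, is not a member, hence its complement is; when the three
sets have empty common intersection, that complement meets `Z` in `Z \ X`, a member disjoint
from `X`.
-/

theorem IsSep.snd_eq_compl {p : Set α × Set α} (h : IsSep p) : p.2 = p.1ᶜ :=
  (isCompl_iff.2 ⟨disjoint_iff_inter_eq_empty.2 h.2, codisjoint_iff.2 h.1⟩).compl_eq.symm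

section SymmetricSubmodular

variable {f : Set α → ℕ}

theorem SymmFn.apply_empty_le (hs : SymmFn f) (hm : SubmodFn f) (A : Set α) : f ∅ ≤ f A := by
  have h := hm A Aᶜ
  rw [inter_compl_self, union_compl_self, ← hs A, ← compl_empty, ← hs ∅] at h
  omega

theorem SymmFn.apply_sdiff_add_apply_sdiff_le (hs : SymmFn f) (hm : SubmodFn f) (A B : Set α) :
    f (A \ B) + f (B \ A) ≤ f A + f B := by
  have h := hm A Bᶜ
  rwa [← hs B, hs (A ∪ Bᶜ), compl_union, compl_compl, inter_comm Aᶜ] at h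

end SymmetricSubmodular

namespace IsUltraSep

variable {f : Set α → ℕ} {k : ℕ} {F : Set (Set α × Set α)}

theorem mem_or_compl_mem (hF : IsUltraSep f k F) {A : Set α} (hA : f A ≤ k) :
    (A, Aᶜ) ∈ F ∨ (Aᶜ, A) ∈ F :=
  hF.2.1 A Aᶜ ⟨union_compl_self A, inter_compl_self A⟩ hA

theorem inter_mem (hF : IsUltraSep f k F) {p q : Set α × Set α} (hp : p ∈ F) (hq : q ∈ F)
    (h : f (p.1 ∩ q.1) ≤ k) : (p.1 ∩ q.1, (p.1 ∩ q.1)ᶜ) ∈ F := by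
  have hpq := hF.2.2.2.2.2 p hp q hq h
  have hsnd : p.2 ∪ q.2 = (p.1 ∩ q.1)ᶜ := (hF.1 _ hpq).1.snd_eq_compl
  rwa [hsnd] at hpq

theorem inter_nonempty (hF : IsUltraSep f k F) (hs : SymmFn f) (hm : SubmodFn f)
    {p q : Set α × Set α} (hp : p ∈ F) (hq : q ∈ F) : (p.1 ∩ q.1).Nonempty := by
  rw [nonempty_iff_ne_empty]
  intro hpq
  have hsmall : f (p.1 ∩ q.1) ≤ k := by
    rw [hpq]
    exact (hs.apply_empty_le hm p.1).trans (hF.1 p hp).2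
  have hempty := hF.inter_mem hp hq hsmall
  rw [hpq, compl_empty] at hempty
  exact hF.2.2.1 hempty

theorem false_of_sdiff_le (hF : IsUltraSep f k F) (hs : SymmFn f) (hm : SubmodFn f)
    {p q r : Set α × Set α} (hp : p ∈ F) (hq : q ∈ F) (hr : r ∈ F)
    (hpqr : p.1 ∩ q.1 ∩ r.1 = ∅) (hpq : f (p.1 \ q.1) ≤ k) (hrp : f (r.1 \ p.1) ≤ k) :
    False := by
  rcases hF.mem_or_compl_mem hpq with hmem | hmem
  · exact (hF.inter_nonempty hs hm hmem hq).ne_empty sdiff_inter_self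
  · have hint : (p.1 \ q.1)ᶜ ∩ r.1 = r.1 \ p.1 := by
      ext x
      have hx := eq_empty_iff_forall_notMem.1 hpqr x
      simp only [mem_inter_iff, mem_compl_iff, mem_sdiff] at hx ⊢
      tauto
    have hmem' := hF.inter_mem hmem hr (by rwa [hint])
    exact (hF.inter_nonempty hs hm hmem' hp).ne_empty (by simp only [hint, sdiff_inter_self])

theorem sdiff_le_or_sdiff_le (hF : IsUltraSep f k F) (hs : SymmFn f) (hm : SubmodFn f)
    {p q : Set α × Set α} (hp : p ∈ F) (hq : q ∈ F) :
    f (p.1 \ q.1) ≤ k ∨ f (q.1 \ p.1) ≤ k := by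
  have := hs.apply_sdiff_add_apply_sdiff_le hm p.1 q.1
  have := (hF.1 p hp).2
  have := (hF.1 q hq).2
  omega

end IsUltraSep

theorem stmt10_general (f : Set α → ℕ) (hs : SymmFn f) (hm : SubmodFn f)
    (k : ℕ) (F : Set (Set α × Set α)) (hF : IsUltraSep f k F) :
    ∀ p₁ ∈ F, ∀ p₂ ∈ F, ∀ p₃ ∈ F,
      p₁.1 ∩ p₂.1 ∩ p₃.1 ≠ (∅ : Set α) := by
  intro p₁ h₁ p₂ h₂ p₃ h₃ hempty
  have path {p q r : Set α × Set α} (hp : p ∈ F) (hq : q ∈ F) (hr : r ∈ F)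
      (hpqr : p.1 ∩ q.1 ∩ r.1 = p₁.1 ∩ p₂.1 ∩ p₃.1) :=
    hF.false_of_sdiff_le hs hm hp hq hr (hpqr.trans hempty)
  have posimod {p q : Set α × Set α} (hp : p ∈ F) (hq : q ∈ F) :=
    hF.sdiff_le_or_sdiff_le hs hm hp hq
  rcases posimod h₁ h₂ with h12 | h21 <;> rcases posimod h₁ h₃ with h13 | h31
  · rcases posimod h₂ h₃ with h23 | h32
    · exact path h₂ h₃ h₁ (by ac_rfl) h23 h12
    · exact path h₃ h₂ h₁ (by ac_rfl) h32 h13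
  · exact path h₁ h₂ h₃ rfl h12 h31
  · exact path h₁ h₃ h₂ (by ac_rfl) h13 h21
  · rcases posimod h₂ h₃ with h23 | h32
    · exact path h₃ h₁ h₂ (by ac_rfl) h31 h23
    · exact path h₂ h₁ h₃ (by ac_rfl) h21 h32

theorem stmt10 [Fintype α] (f : Set α → ℕ) (hs : SymmFn f) (hm : SubmodFn f)
    (k : ℕ) (F : Set (Set α × Set α)) (hF : IsUltraSep f k F) :
    ∀ p₁ ∈ F, ∀ p₂ ∈ F, ∀ p₃ ∈ F,
      p₁.1 ∩ p₂.1 ∩ p₃.1 ≠ (∅ : Set α) :=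
  stmt10_general f hs hm k F hF
end

section
/- There exists a tangle of separations of order k+1 on (X, f) if and only if there exists a non-principal profile of separations of order k+1 on (X, f). -/
open Set

variable {α : Type*}

/-!
A tangle is a non-principal profile: consistency and the profile property are instances of
the covering axiom (T3). Conversely a non-principal profile `P` is already a tangle, and the only
point is (T3). Take three small sides `A₁, A₂, A₃` of `P` covering the ground set, with
`|A₁| + |A₂| + |A₃|` minimal. If `A₃` meets `A₁`, say, then by posimodularity
`f (A₁ \ A₃) + f (A₃ \ A₁) ≤ f A₁ + f A₃`, so one of the two differences has order at most `k`;
by consistency it is again a small side of `P`, and replacing `A₁` by `A₁ \ A₃` (or `A₃` by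
`A₃ \ A₁`) gives a smaller cover. So `A₃` is disjoint from `A₁` and `A₂`, hence
`A₃ = (A₁ ∪ A₂)ᶜ`, and `(A₁ᶜ ∩ A₂ᶜ, A₁ ∪ A₂) ∈ P` contradicts (P3).
-/

lemma isSep_iff {A B : Set α} : IsSep (A, B) ↔ B = Aᶜ := by
  rw [eq_compl_iff_isCompl, isCompl_comm, isCompl_iff, disjoint_iff_inter_eq_empty,
    codisjoint_iff]
  exact and_comm

lemma isSep_compl (A : Set α) : IsSep (A, Aᶜ) := isSep_iff.2 rfl

lemma SymmFn.posimodular {f : Set α → ℕ} (hs : SymmFn f) (hm : SubmodFn f) (A C : Set α) :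
    f (A \ C) + f (C \ A) ≤ f A + f C := by
  have h := hm A Cᶜ
  rw [← hs C, hs (A ∪ Cᶜ), compl_union, compl_compl] at h
  rw [sdiff_eq, sdiff_eq, inter_comm C]
  omega

namespace IsTangle

variable {f : Set α → ℕ} {k : ℕ} {T : Set (Set α × Set α)}

theorem isProfileSep (hT : IsTangle f k T) : IsProfileSep f k T := by
  obtain ⟨hsep, hcomp, -, hcov⟩ := hT
  refine ⟨hsep, hcomp, ?_, ?_⟩
  · rintro p q hq ⟨-, hqp⟩ - - hp
    refine hcov q hq _ hp _ hp (eq_univ_of_univ_subset ?_)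
    calc univ = q.1 ∪ q.2 := (hsep q hq).1.1.symm
      _ ⊆ q.1 ∪ p.2 ∪ p.2 := by
        rw [union_assoc, union_self]
        exact union_subset_union_right _ hqp
  · intro p hp q hq hpq
    refine hcov p hp q hq _ hpq ?_
    change p.1 ∪ q.1 ∪ (p.2 ∩ q.2) = univ
    rw [isSep_iff.1 (hsep p hp).1, isSep_iff.1 (hsep q hq).1, ← compl_union, union_compl_self]

end IsTangle

namespace IsProfileSep

variable {f : Set α → ℕ} {k : ℕ} {P : Set (Set α × Set α)}

lemma eq_compl_of_mem (hP : IsProfileSep f k P) {A B : Set α} (h : (A, B) ∈ P) : B = Aᶜ :=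
  isSep_iff.1 (hP.1 _ h).1

lemma order_le (hP : IsProfileSep f k P) {A B : Set α} (h : (A, B) ∈ P) : f A ≤ k :=
  (hP.1 _ h).2

lemma mem_of_subset (hP : IsProfileSep f k P) {A B : Set α} (hA : (A, Aᶜ) ∈ P) (hBA : B ⊆ A)
    (hB : f B ≤ k) : (B, Bᶜ) ∈ P :=
  (hP.2.1 B Bᶜ (isSep_compl B) hB).resolve_right
    (hP.2.2.1 _ _ hA ⟨hBA, compl_subset_compl.2 hBA⟩ (isSep_compl B) hB)

lemma exists_smaller_cover [Finite α] (hs : SymmFn f) (hm : SubmodFn f)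
    (hP : IsProfileSep f k P) {A C : Set α} (hA : (A, Aᶜ) ∈ P) (hC : (C, Cᶜ) ∈ P)
    (hAC : ¬Disjoint A C) :
    ∃ A' C' : Set α, (A', A'ᶜ) ∈ P ∧ (C', C'ᶜ) ∈ P ∧ A' ∪ C' = A ∪ C ∧
      A'.ncard + C'.ncard < A.ncard + C.ncard := by
  rw [not_disjoint_iff_nonempty_inter] at hAC
  by_cases h : f (A \ C) ≤ k
  · refine ⟨A \ C, C, hP.mem_of_subset hA sdiff_subset h, hC, sdiff_union_self, ?_⟩
    have := ncard_lt_ncard (sdiff_ssubset_left_iff.2 hAC)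
    omega
  · have hCA : f (C \ A) ≤ k := by
      have := hs.posimodular hm A C
      have := hP.order_le hA
      have := hP.order_le hC
      omega
    refine ⟨A, C \ A, hA, hP.mem_of_subset hC sdiff_subset hCA, union_sdiff_self, ?_⟩
    have := ncard_lt_ncard (sdiff_ssubset_left_iff.2 (inter_comm A C ▸ hAC))
    omega

lemma union_union_ne_univ_of_disjoint (hP : IsProfileSep f k P) {A₁ A₂ A₃ : Set α}
    (h₁ : (A₁, A₁ᶜ) ∈ P) (h₂ : (A₂, A₂ᶜ) ∈ P) (h₃ : (A₃, A₃ᶜ) ∈ P)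
    (h₁₃ : Disjoint A₁ A₃) (h₂₃ : Disjoint A₂ A₃) : A₁ ∪ A₂ ∪ A₃ ≠ univ := by
  intro hcov
  have hA₃ : A₃ = (A₁ ∪ A₂)ᶜ :=
    IsCompl.eq_compl ⟨(disjoint_union_left.2 ⟨h₁₃, h₂₃⟩).symm,
      (codisjoint_iff.2 hcov).symm⟩
  rw [hA₃, compl_compl, compl_union] at h₃
  exact hP.2.2.2 _ h₁ _ h₂ h₃

theorem union_union_ne_univ [Finite α] (hs : SymmFn f) (hm : SubmodFn f)
    (hP : IsProfileSep f k P) {A₁ A₂ A₃ : Set α}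
    (h₁ : (A₁, A₁ᶜ) ∈ P) (h₂ : (A₂, A₂ᶜ) ∈ P) (h₃ : (A₃, A₃ᶜ) ∈ P) :
    A₁ ∪ A₂ ∪ A₃ ≠ univ := by
  by_cases h₁₃ : Disjoint A₁ A₃
  · by_cases h₂₃ : Disjoint A₂ A₃
    · exact hP.union_union_ne_univ_of_disjoint h₁ h₂ h₃ h₁₃ h₂₃
    · obtain ⟨A', C', hA', hC', hunion, _⟩ := hP.exists_smaller_cover hs hm h₂ h₃ h₂₃
      rw [union_assoc, ← hunion, ← union_assoc]
      exact union_union_ne_univ hs hm hP h₁ hA' hC'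
  · obtain ⟨A', C', hA', hC', hunion, _⟩ := hP.exists_smaller_cover hs hm h₁ h₃ h₁₃
    rw [union_right_comm, ← hunion, union_right_comm]
    exact union_union_ne_univ hs hm hP hA' h₂ hC'
termination_by A₁.ncard + A₂.ncard + A₃.ncard

theorem isTangle [Finite α] (hs : SymmFn f) (hm : SubmodFn f) (hP : IsProfileSep f k P)
    (hnp : NonPrincipalSep f k P) : IsTangle f k P := by
  refine ⟨hP.1, hP.2.1, hnp, ?_⟩
  rintro ⟨A₁, B₁⟩ h₁ ⟨A₂, B₂⟩ h₂ ⟨A₃, B₃⟩ h₃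
  obtain rfl := hP.eq_compl_of_mem h₁
  obtain rfl := hP.eq_compl_of_mem h₂
  obtain rfl := hP.eq_compl_of_mem h₃
  exact hP.union_union_ne_univ hs hm h₁ h₂ h₃

end IsProfileSep

theorem stmt14 [Fintype α] (f : Set α → ℕ) (hs : SymmFn f) (hm : SubmodFn f)
    (k : ℕ) :
    (∃ T : Set (Set α × Set α), IsTangle f k T) ↔
      (∃ P : Set (Set α × Set α), IsProfileSep f k P ∧ NonPrincipalSep f k P) :=
  ⟨fun ⟨T, hT⟩ => ⟨T, hT.isProfileSep, hT.2.2.1⟩,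
    fun ⟨P, hP, hnp⟩ => ⟨P, hP.isTangle hs hm hnp⟩⟩
end
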